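/- arXiv:2601.19032 — 5 statements merged into one kernel-verified Lean document; each statement's English description precedes it below -/
import Mathlib

section
/- Let f ∈ ℓ¹(ℤ) and for each n ∈ ℤ let r_n = min{r ∈ ℕ : Mf(n) = A_r f(n)} be the discrete frequency function. Then for every ε ∈ (0, 1/2), the set { n ∈ ℤ : r_n/|n| ∈ [ε, 1-ε] } is finite. -/
open scoped BigOperators

noncomputable def discAvg (f : ℤ → ℝ) (r : ℕ) (n : ℤ) : ℝ :=
  (∑ j ∈ Finset.Icc (-(r : ℤ)) (r : ℤ), |f (n + j)|) / (2 * r + 1)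

noncomputable def discMax (f : ℤ → ℝ) (n : ℤ) : ℝ := ⨆ r : ℕ, discAvg f r n

/-- Discrete frequency function `r_n = min {r : Mf(n) = A_r f(n)}`. -/
noncomputable def discFreq (f : ℤ → ℝ) (n : ℤ) : ℕ :=
  sInf {r : ℕ | discMax f n = discAvg f r n}

lemma discAvg_eq (f : ℤ → ℝ) (r : ℕ) (n : ℤ) :
    discAvg f r n = (∑ i ∈ Finset.Icc (n - r) (n + r), |f i|) / (2 * r + 1) := by
  unfold discAvg
  congr 1
  refine Finset.sum_nbij' (fun j => n + j) (fun i => i - n) ?_ ?_ ?_ ?_ ?_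
  · intro j hj; simp only [Finset.mem_Icc] at *; omega
  · intro i hi; simp only [Finset.mem_Icc] at *; omega
  · intro j _; omega
  · intro i _; omega
  · intro j _; rfl

lemma sum_abs_le_tsum (f : ℤ → ℝ) (hf : Summable fun n => |f n|) (G : Finset ℤ) :
    ∑ i ∈ G, |f i| ≤ ∑' i, |f i| :=
  Summable.sum_le_tsum G (fun _ _ => abs_nonneg _) hf

lemma discAvg_le_div (f : ℤ → ℝ) (hf : Summable fun n => |f n|) (r : ℕ) (n : ℤ) :
    discAvg f r n ≤ (∑' i, |f i|) / (2 * r + 1) := by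
  rw [discAvg_eq]
  have hpos : (0:ℝ) < 2 * r + 1 := by positivity
  gcongr
  exact sum_abs_le_tsum f hf _

lemma discAvg_le_tsum (f : ℤ → ℝ) (hf : Summable fun n => |f n|) (r : ℕ) (n : ℤ) :
    discAvg f r n ≤ ∑' i, |f i| := by
  refine (discAvg_le_div f hf r n).trans ?_
  have h1 : (1:ℝ) ≤ 2 * r + 1 := by
    have : (0:ℝ) ≤ (r:ℝ) := Nat.cast_nonneg r
    linarith
  exact div_le_self (tsum_nonneg fun i => abs_nonneg _) h1

lemma discAvg_nonneg (f : ℤ → ℝ) (r : ℕ) (n : ℤ) : 0 ≤ discAvg f r n := by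
  unfold discAvg
  positivity

lemma bddAbove_discAvg (f : ℤ → ℝ) (hf : Summable fun n => |f n|) (n : ℤ) :
    BddAbove (Set.range fun r => discAvg f r n) := by
  refine ⟨∑' i, |f i|, ?_⟩
  rintro _ ⟨r, rfl⟩
  exact discAvg_le_tsum f hf r n

lemma discAvg_le_discMax (f : ℤ → ℝ) (hf : Summable fun n => |f n|) (r : ℕ) (n : ℤ) :
    discAvg f r n ≤ discMax f n :=
  le_ciSup (bddAbove_discAvg f hf n) r

lemma attain (f : ℤ → ℝ) (hf : Summable fun n => |f n|) (n : ℤ) :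
    {r : ℕ | discMax f n = discAvg f r n}.Nonempty := by
  by_cases h0 : discMax f n = discAvg f 0 n
  · exact ⟨0, h0⟩
  set S := ∑' i, |f i| with hS
  have hS0 : 0 ≤ S := tsum_nonneg fun i => abs_nonneg _
  set M := discMax f n with hM
  have hM0 : 0 < M := by
    have h1 : discAvg f 0 n ≤ M := discAvg_le_discMax f hf 0 n
    have h2 : 0 ≤ discAvg f 0 n := discAvg_nonneg f 0 n
    rcases lt_or_eq_of_le h1 with h | h
    · linarith
    · exact absurd h.symm h0
  set R := ⌈S / M⌉₊ with hR
  have hSR : S < M * (2 * R + 1) := by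
    have h1 : S / M ≤ R := Nat.le_ceil _
    have h2 : S ≤ M * R := by
      rw [div_le_iff₀ hM0] at h1; linarith [h1]
    nlinarith
  have htail : S / (2 * (R:ℝ) + 1) < M := by
    rw [div_lt_iff₀ (by positivity)]
    linarith
  obtain ⟨r0, _, hr0⟩ := Finset.exists_max_image (Finset.range (R + 1))
    (fun r => discAvg f r n) ⟨R, Finset.mem_range.mpr (Nat.lt_succ_self R)⟩
  have hub : M ≤ max (discAvg f r0 n) (S / (2 * (R:ℝ) + 1)) := by
    refine ciSup_le fun r => ?_
    by_cases hr : r ≤ R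
    · exact le_max_of_le_left (hr0 r (Finset.mem_range.mpr (Nat.lt_succ_of_le hr)))
    · push_neg at hr
      refine le_max_of_le_right ((discAvg_le_div f hf r n).trans ?_)
      have hpos : (0:ℝ) < 2 * (R:ℝ) + 1 := by positivity
      have hrr : ((R:ℝ)) ≤ (r:ℝ) := by exact_mod_cast hr.le
      gcongr
  rcases max_cases (discAvg f r0 n) (S / (2 * (R:ℝ) + 1)) with ⟨heq, _⟩ | ⟨heq, _⟩
  · rw [heq] at hub
    exact ⟨r0, le_antisymm hub (discAvg_le_discMax f hf r0 n)⟩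
  · rw [heq] at hub
    exact absurd (lt_of_le_of_lt hub htail) (lt_irrefl M)

lemma discFreq_spec (f : ℤ → ℝ) (hf : Summable fun n => |f n|) (n : ℤ) :
    discMax f n = discAvg f (discFreq f n) n :=
  Nat.sInf_mem (attain f hf n)

theorem stmt4 (f : ℤ → ℝ) (hf : Summable fun n => |f n|)
    (ε : ℝ) (hε0 : 0 < ε) (hε : ε < 1 / 2) :
    {n : ℤ | ε ≤ (discFreq f n : ℝ) / |(n : ℝ)| ∧
      (discFreq f n : ℝ) / |(n : ℝ)| ≤ 1 - ε}.Finite := by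
  by_cases hf0 : ∀ m, f m = 0
  · convert Set.finite_empty
    ext n
    simp only [Set.mem_setOf_eq, Set.mem_empty_iff_false, iff_false, not_and]
    intro h1 _
    have hzero : discMax f n = discAvg f 0 n := by
      have hA : ∀ r : ℕ, discAvg f r n = 0 := by
        intro r; unfold discAvg; simp [hf0]
      unfold discMax
      simp [hA]
    have hfreq : discFreq f n = 0 := Nat.eq_zero_of_le_zero (Nat.sInf_le hzero)
    rw [hfreq] at h1
    simp at h1
    linarith
  push_neg at hf0
  obtain ⟨m, hm⟩ := hf0
  set S := ∑' i, |f i| with hSdef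
  have hS0 : 0 ≤ S := tsum_nonneg fun i => abs_nonneg _
  set c := |f m| with hcdef
  have hc0 : 0 < c := abs_pos.mpr hm
  set δ := ε * c / 2 with hδdef
  have hδ0 : 0 < δ := by positivity
  obtain ⟨F, hF⟩ : ∃ F : Finset ℤ, S - δ < ∑ i ∈ F, |f i| := by
    have h2 : ∀ᶠ (s : Finset ℤ) in Filter.atTop, S - δ < ∑ i ∈ s, |f i| :=
      hf.hasSum.eventually (eventually_gt_nhds (by linarith))
    exact h2.exists
  set K := F.sup (fun i => i.natAbs) with hKdef
  have hKF : ∀ i ∈ F, (i.natAbs : ℕ) ≤ K := fun i hi => Finset.le_sup hi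
  set k := m.natAbs with hkdef
  set B : ℝ := max ((K + 1) / ε) (k + 1) with hBdef
  apply Set.Finite.subset (Set.finite_Icc (-(⌈B⌉ : ℤ)) ⌈B⌉)
  intro n hn
  obtain ⟨h1, h2⟩ := hn
  have hNle : |(n : ℝ)| ≤ B := by
    by_contra hNB
    push_neg at hNB
    set N := |(n : ℝ)| with hNdef
    have hBk : ((k:ℝ) + 1) ≤ B := le_max_right _ _
    have hBK : ((K:ℝ) + 1) / ε ≤ B := le_max_left _ _
    have hN0 : 0 < N := lt_of_le_of_lt (by positivity) hNB
    set r := discFreq f n with hrdef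
    have hεr : ε * N ≤ (r : ℝ) := (le_div_iff₀ hN0).mp h1
    have hru : (r : ℝ) ≤ (1 - ε) * N := (div_le_iff₀ hN0).mp h2
    have hMa : discMax f n = discAvg f r n := discFreq_spec f hf n
    set R := n.natAbs + k with hRdef
    have hRcast : ((R : ℕ) : ℝ) = N + k := by
      rw [hRdef]
      push_cast
      rw [Nat.cast_natAbs, Int.cast_abs, hNdef]
    -- lower bound : c / (2R+1) ≤ discAvg f R n ≤ discMax f n
    have hmem : m - n ∈ Finset.Icc (-(R : ℤ)) (R : ℤ) := by
      simp only [Finset.mem_Icc]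
      have h1 : (m - n).natAbs ≤ m.natAbs + n.natAbs := by omega
      omega
    have hlow : c / (2 * (R:ℝ) + 1) ≤ discAvg f R n := by
      unfold discAvg
      have hterm : c ≤ ∑ j ∈ Finset.Icc (-(R : ℤ)) (R : ℤ), |f (n + j)| := by
        have := Finset.single_le_sum (f := fun j => |f (n + j)|)
          (fun j _ => abs_nonneg _) hmem
        simpa [show n + (m - n) = m by ring] using this
      gcongr
    have hAle : discAvg f R n ≤ discMax f n := discAvg_le_discMax f hf R n
    -- upper bound
    set W := Finset.Icc (n - (r:ℤ)) (n + (r:ℤ)) with hWdef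
    have hεNK : (K : ℝ) + 1 < ε * N := by
      rw [div_le_iff₀ hε0] at hBK
      calc (K:ℝ) + 1 ≤ B * ε := hBK
        _ < N * ε := mul_lt_mul_of_pos_right hNB hε0
        _ = ε * N := mul_comm _ _
    have hdisj : Disjoint W F := by
      rw [Finset.disjoint_left]
      intro i hiW hiF
      have hKi : (i.natAbs : ℝ) ≤ K := by exact_mod_cast hKF i hiF
      have habs : |(i:ℝ)| ≤ K := by
        rw [← Int.cast_abs, Int.abs_eq_natAbs]; exact_mod_cast hKi
      simp only [hWdef, Finset.mem_Icc] at hiW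
      have hlb : N - (r:ℝ) ≤ |(i:ℝ)| := by
        have hZZ : |n - i| ≤ (r:ℤ) := abs_le.mpr ⟨by omega, by omega⟩
        have hni : |(n:ℝ) - (i:ℝ)| ≤ (r:ℝ) := by
          have h' : ((|n - i| : ℤ) : ℝ) ≤ ((r:ℤ) : ℝ) := by exact_mod_cast hZZ
          rw [Int.cast_abs] at h'
          push_cast at h'
          exact h'
        have := abs_sub_abs_le_abs_sub (n:ℝ) (i:ℝ)
        rw [hNdef]
        linarith
      have : ε * N ≤ |(i:ℝ)| := by linarith
      linarith
    have hWsum : ∑ i ∈ W, |f i| < δ := by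
      have hunion : ∑ i ∈ W, |f i| + ∑ i ∈ F, |f i| ≤ S := by
        rw [← Finset.sum_union hdisj]
        exact sum_abs_le_tsum f hf _
      linarith
    have hupp : discAvg f r n ≤ (∑ i ∈ W, |f i|) / (2 * (r:ℝ) + 1) := by
      rw [discAvg_eq]
    -- combine
    have hchain : c / (2 * (R:ℝ) + 1) ≤ (∑ i ∈ W, |f i|) / (2 * (r:ℝ) + 1) := by
      calc c / (2 * (R:ℝ) + 1) ≤ discAvg f R n := hlow
        _ ≤ discMax f n := hAle
        _ = discAvg f r n := hMa
        _ ≤ _ := hupp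
    have hfin : c * (2 * (r:ℝ) + 1) ≤ (∑ i ∈ W, |f i|) * (2 * (R:ℝ) + 1) := by
      rw [div_le_div_iff₀ (by positivity) (by positivity)] at hchain
      exact hchain
    have hWnn : (0:ℝ) ≤ ∑ i ∈ W, |f i| := Finset.sum_nonneg fun i _ => abs_nonneg _
    have hfin2 : c * (2 * (r:ℝ) + 1) < δ * (2 * (R:ℝ) + 1) := by
      have : (∑ i ∈ W, |f i|) * (2 * (R:ℝ) + 1) < δ * (2 * (R:ℝ) + 1) := by
        apply mul_lt_mul_of_pos_right hWsum (by positivity)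
      linarith
    rw [hRcast] at hfin2
    rw [hδdef] at hfin2
    -- c (2r+1) < (εc/2)(2(N+k)+1), εN ≤ r, N > B ≥ k+1
    have hNk : (k:ℝ) + 1 < N := lt_of_le_of_lt hBk hNB
    have e1 : c * (2 * (ε * N) + 1) ≤ c * (2 * (r:ℝ) + 1) :=
      mul_le_mul_of_nonneg_left (by linarith) hc0.le
    have e2 : ε * c / 2 * (2 * (N + (k:ℝ)) + 1) = c * ((ε / 2) * (2 * (N + (k:ℝ)) + 1)) := by
      ring
    rw [e2] at hfin2
    have e3 : 2 * (ε * N) + 1 < (ε / 2) * (2 * (N + (k:ℝ)) + 1) :=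
      lt_of_mul_lt_mul_left (lt_of_le_of_lt e1 hfin2) hc0.le
    -- 2εN + 1 < εN + εk + ε/2  ⇒  εN + 1 < εk + ε/2; also ε(N-k) > ε
    have e4 : ε * ((k:ℝ) + 1) < ε * N := mul_lt_mul_of_pos_left hNk hε0
    nlinarith [e3, e4]
  have hceil : |n| ≤ ⌈B⌉ := by
    have h1 : ((|n| : ℤ) : ℝ) ≤ B := by rw [Int.cast_abs]; exact hNle
    have h2 : B ≤ (⌈B⌉ : ℝ) := Int.le_ceil B
    exact_mod_cast h1.trans h2
  simp only [Set.mem_Icc]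
  exact abs_le.mp hceil
end

section
/- Let f ∈ L¹(ℝ^d) and define the frequency function r_x = inf{r > 0 : Mf(x) = A_r f(x)} when this set is non-empty and r_x = 0 otherwise. Then for every ε > 0, the set { x ∈ ℝ^d : r_x/|x| ∉ [0, ε) ∪ (1-ε, 1+ε) } is bounded. -/
open MeasureTheory

noncomputable def contAvg (d : ℕ) (f : EuclideanSpace ℝ (Fin d) → ℝ) (r : ℝ)
    (x : EuclideanSpace ℝ (Fin d)) : ℝ :=
  (∫ y in Metric.ball x r, |f y|) / (volume (Metric.ball x r)).toReal

noncomputable def contMax (d : ℕ) (f : EuclideanSpace ℝ (Fin d) → ℝ)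
    (x : EuclideanSpace ℝ (Fin d)) : ℝ :=
  sSup ((fun r => contAvg d f r x) '' Set.Ioi (0 : ℝ))

/-- Frequency function: `inf {r > 0 : Mf(x) = A_r f(x)}`, and `0` if this set is
empty (note that in Mathlib `sInf ∅ = 0` for real sets). -/
noncomputable def contFreq (d : ℕ) (f : EuclideanSpace ℝ (Fin d) → ℝ)
    (x : EuclideanSpace ℝ (Fin d)) : ℝ :=
  sInf {r : ℝ | 0 < r ∧ contMax d f x = contAvg d f r x}

/-! For `‖x‖` large, the ball `B(x, ‖x‖ + ρ)` swallows a ball `B(0, ρ)` carrying almost all of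
`∫ |f|`, at a price of only a factor `(1 + δ/2)^d` in volume. A ball `B(x, r)` with
`δ‖x‖ ≤ r ≤ (1 - δ)‖x‖` misses `B(0, ρ)`, so it only sees the small tail mass, and a ball with
`r ≥ (1 + δ)‖x‖` has at most the mass `∫ |f|` spread over a volume larger by `(1 + δ)^d`.
Neither kind of radius can attain `Mf(x)`, so every attaining radius is below `δ‖x‖` or in
`((1 - δ)‖x‖, (1 + δ)‖x‖)`, and so is their infimum `r_x`, up to the closed left endpoint. -/

open Metric Set Filter

lemma Real.sInf_lt_or_mem_Ico {S : Set ℝ} {a b c : ℝ} (ha : 0 < a) (hS : BddBelow S)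
    (hmem : ∀ r ∈ S, r < a ∨ r ∈ Ioo b c) :
    sInf S < a ∨ sInf S ∈ Ico b c := by
  rcases S.eq_empty_or_nonempty with rfl | ⟨r₀, hr₀⟩
  · exact Or.inl (by rwa [Real.sInf_empty])
  by_cases hsmall : ∃ r ∈ S, r < a
  · obtain ⟨r, hr, hra⟩ := hsmall
    exact Or.inl ((csInf_le hS hr).trans_lt hra)
  push Not at hsmall
  have hwin : ∀ r ∈ S, r ∈ Ioo b c := fun r hr => (hmem r hr).resolve_left (hsmall r hr).not_gt
  exact Or.inr ⟨le_csInf ⟨r₀, hr₀⟩ fun r hr => (hwin r hr).1.le,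
    (csInf_le hS hr₀).trans_lt (hwin r₀ hr₀).2⟩

lemma setIntegral_abs_mono_set {α : Type*} [MeasurableSpace α] {μ : Measure α} {g : α → ℝ}
    (hg : Integrable g μ) {s t : Set α} (hst : s ⊆ t) :
    ∫ y in s, |g y| ∂μ ≤ ∫ y in t, |g y| ∂μ :=
  setIntegral_mono_set hg.abs.integrableOn (ae_of_all _ fun _ => abs_nonneg _) hst.eventuallyLE

section

variable {d : ℕ} {f : EuclideanSpace ℝ (Fin d) → ℝ} {x : EuclideanSpace ℝ (Fin d)} {r : ℝ}

lemma contFreq_nonneg : 0 ≤ contFreq d f x :=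
  Real.sInf_nonneg fun _ hr => hr.1.le

lemma contAvg_eq (hd : 0 < d) (hr : 0 ≤ r) :
    contAvg d f r x = (∫ y in ball x r, |f y|)
      / (r ^ d * (volume (ball (0 : EuclideanSpace ℝ (Fin d)) 1)).toReal) := by
  have : Nontrivial (EuclideanSpace ℝ (Fin d)) :=
    Module.nontrivial_of_finrank_pos (R := ℝ) (by rwa [finrank_euclideanSpace_fin])
  rw [contAvg, Measure.addHaar_ball volume x hr, ENNReal.toReal_mul,
    ENNReal.toReal_ofReal (pow_nonneg hr _), finrank_euclideanSpace_fin]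

lemma volume_ball_toReal_pos (hr : 0 < r) : 0 < (volume (ball x r)).toReal :=
  ENNReal.toReal_pos (measure_ball_pos volume x hr).ne' measure_ball_lt_top.ne

lemma contAvg_le_of_ball_subset (hd : 0 < d) (hf : Integrable f volume) {t : Set _} {r₁ : ℝ}
    (hr₁ : 0 < r₁) (hr : r₁ ≤ r) (ht : ball x r ⊆ t) :
    contAvg d f r x ≤ (∫ y in t, |f y|)
      / (r₁ ^ d * (volume (ball (0 : EuclideanSpace ℝ (Fin d)) 1)).toReal) := by
  have hc := volume_ball_toReal_pos (x := (0 : EuclideanSpace ℝ (Fin d))) one_pos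
  rw [contAvg_eq hd (hr₁.le.trans hr)]
  exact div_le_div₀ (integral_nonneg fun _ => abs_nonneg _) (setIntegral_abs_mono_set hf ht)
    (by positivity) (by gcongr)

lemma le_contAvg_of_subset_ball (hd : 0 < d) (hf : Integrable f volume) {t : Set _} {r₂ : ℝ}
    (hr : 0 < r) (hr₂ : r ≤ r₂) (ht : t ⊆ ball x r) :
    (∫ y in t, |f y|) / (r₂ ^ d * (volume (ball (0 : EuclideanSpace ℝ (Fin d)) 1)).toReal)
      ≤ contAvg d f r x := by
  have hc := volume_ball_toReal_pos (x := (0 : EuclideanSpace ℝ (Fin d))) one_pos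
  rw [contAvg_eq hd hr.le]
  exact div_le_div₀ (integral_nonneg fun _ => abs_nonneg _) (setIntegral_abs_mono_set hf ht)
    (by positivity) (by gcongr)

/-- If `Mf(x)` is attained at `r` although the averages were unbounded, then `Mf(x)` is the junk
value `0`, so `B(x, r)` carries no mass; but then all averages are at most
`∫ |f| / |B(x, r)|`. -/
lemma bddAbove_contAvg_of_contMax_eq (hf : Integrable f volume) (hr : 0 < r)
    (hmax : contMax d f x = contAvg d f r x) :
    BddAbove ((fun s => contAvg d f s x) '' Ioi 0) := by
  by_contra hunb
  have hvol := volume_ball_toReal_pos (x := x) hr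
  have hzero : ∫ y in ball x r, |f y| = 0 := by
    have h0 : contAvg d f r x = 0 := by rw [← hmax, contMax, Real.sSup_of_not_bddAbove hunb]
    rw [contAvg, div_eq_zero_iff] at h0
    exact h0.resolve_right hvol.ne'
  refine hunb ⟨(∫ y, |f y|) / (volume (ball x r)).toReal, ?_⟩
  rintro _ ⟨s, -, rfl⟩
  rcases le_or_gt s r with hsr | hrs
  · refine (div_nonpos_of_nonpos_of_nonneg ?_ ENNReal.toReal_nonneg).trans
      (div_nonneg (integral_nonneg fun _ => abs_nonneg _) hvol.le)
    exact hzero ▸ setIntegral_abs_mono_set hf (ball_subset_ball hsr)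
  · exact div_le_div₀ (integral_nonneg fun _ => abs_nonneg _)
      (setIntegral_le_integral hf.abs (ae_of_all _ fun _ => abs_nonneg _)) hvol
      (ENNReal.toReal_mono measure_ball_lt_top.ne (measure_mono (ball_subset_ball hrs.le)))

lemma contFreq_lt_or_mem_Ico (hf : Integrable f volume) {a b c s : ℝ} (ha : 0 < a) (hs : 0 < s)
    (hlt : ∀ r, a ≤ r → r ∉ Ioo b c → contAvg d f r x < contAvg d f s x) :
    contFreq d f x < a ∨ contFreq d f x ∈ Ico b c := by
  refine Real.sInf_lt_or_mem_Ico ha ⟨0, fun _ hr => hr.1.le⟩ fun r ⟨hr, hmax⟩ => ?_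
  by_contra hcon
  rw [not_or, not_lt] at hcon
  have hle : contAvg d f s x ≤ contAvg d f r x :=
    hmax ▸ le_csSup (bddAbove_contAvg_of_contMax_eq hf hr hmax) ⟨s, hs, rfl⟩
  exact (hlt r hcon.1 hcon.2).not_ge hle

lemma contFreq_eq_zero_of_integral_abs_eq_zero (hf : Integrable f volume)
    (hI : ∫ y, |f y| = 0) : contFreq d f x = 0 := by
  have hAvg : ∀ r, contAvg d f r x = 0 := fun r => by
    rw [contAvg, le_antisymm (hI ▸ setIntegral_le_integral hf.abs
      (ae_of_all _ fun _ => abs_nonneg _)) (integral_nonneg fun _ => abs_nonneg _), zero_div]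
  have hMax : contMax d f x = 0 := by
    rw [contMax, funext hAvg, nonempty_Ioi.image_const, csSup_singleton]
  have hS : {r : ℝ | 0 < r ∧ contMax d f x = contAvg d f r x} = Ioi 0 := by
    ext r
    simp [hMax, hAvg r]
  rw [contFreq, hS, csInf_Ioi]

lemma exists_ball_mass_concentrated (hd : 0 < d) (hf : Integrable f volume)
    (hI : 0 < ∫ y, |f y|) {δ : ℝ} (hδ : 0 < δ) :
    ∃ ρ : ℝ, 0 ≤ ρ ∧
      ((∫ y, |f y|) - ∫ y in ball (0 : EuclideanSpace ℝ (Fin d)) ρ, |f y|) / δ ^ d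
        < (∫ y in ball (0 : EuclideanSpace ℝ (Fin d)) ρ, |f y|) / (1 + δ / 2) ^ d ∧
      (∫ y, |f y|) / (1 + δ) ^ d
        < (∫ y in ball (0 : EuclideanSpace ℝ (Fin d)) ρ, |f y|) / (1 + δ / 2) ^ d := by
  set I := ∫ y, |f y|
  have hmass : Tendsto (fun n : ℕ => ∫ y in ball (0 : EuclideanSpace ℝ (Fin d)) n, |f y|)
      atTop (nhds I) := by
    have h := tendsto_setIntegral_of_monotone (μ := volume)
      (s := fun n : ℕ => ball (0 : EuclideanSpace ℝ (Fin d)) n) (fun _ => measurableSet_ball)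
      (fun _ _ hij => ball_subset_ball (Nat.cast_le.2 hij))
      (by rw [iUnion_ball_nat]; exact hf.abs.integrableOn)
    rwa [iUnion_ball_nat, setIntegral_univ] at h
  have htail : Tendsto (fun n : ℕ => (I - ∫ y in ball (0 : EuclideanSpace ℝ (Fin d)) n, |f y|)
      / δ ^ d) atTop (nhds 0) := by
    simpa using ((tendsto_const_nhds (x := I)).sub hmass).div_const (δ ^ d)
  have hscaled := hmass.div_const ((1 + δ / 2) ^ d)
  have hgrowth : I / (1 + δ) ^ d < I / (1 + δ / 2) ^ d :=
    div_lt_div_of_pos_left hI (by positivity) (pow_lt_pow_left₀ (by linarith) (by positivity) hd.ne')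
  obtain ⟨n, hmid, hfar⟩ :=
    ((htail.eventually_lt hscaled (by positivity)).and
      (tendsto_const_nhds.eventually_lt hscaled hgrowth)).exists
  exact ⟨n, n.cast_nonneg, hmid, hfar⟩

lemma contAvg_lt_of_mass_concentrated (hd : 0 < d) (hf : Integrable f volume) {ρ δ : ℝ}
    (hδ : 0 < δ) (hρ : 0 ≤ ρ) (hx : 0 < ‖x‖) (hρx : ρ ≤ δ / 2 * ‖x‖)
    (hmid : ((∫ y, |f y|) - ∫ y in ball 0 ρ, |f y|) / δ ^ d
      < (∫ y in ball 0 ρ, |f y|) / (1 + δ / 2) ^ d)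
    (hfar : (∫ y, |f y|) / (1 + δ) ^ d < (∫ y in ball 0 ρ, |f y|) / (1 + δ / 2) ^ d)
    (hr : δ * ‖x‖ ≤ r) (hwin : r ∉ Ioo ((1 - δ) * ‖x‖) ((1 + δ) * ‖x‖)) :
    contAvg d f r x < contAvg d f (‖x‖ + ρ) x := by
  set c := (volume (ball (0 : EuclideanSpace ℝ (Fin d)) 1)).toReal
  have hN : 0 < ‖x‖ ^ d * c := by
    have := volume_ball_toReal_pos (x := (0 : EuclideanSpace ℝ (Fin d))) one_pos
    positivity
  have hscale : ∀ a, (a * ‖x‖) ^ d * c = a ^ d * (‖x‖ ^ d * c) := fun a => by ring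
  have hlow : (∫ y in ball 0 ρ, |f y|) / (1 + δ / 2) ^ d / (‖x‖ ^ d * c)
      ≤ contAvg d f (‖x‖ + ρ) x := by
    rw [div_div, ← hscale]
    refine le_contAvg_of_subset_ball hd hf (by positivity) (by linarith) fun y hy => ?_
    rw [mem_ball_zero_iff] at hy
    rw [mem_ball, dist_eq_norm]
    linarith [norm_sub_le y x]
  refine lt_of_lt_of_le ?_ hlow
  rcases le_or_gt r ((1 - δ) * ‖x‖) with hnear | hfar'
  · have htail : ∫ y in (ball 0 ρ)ᶜ, |f y| = (∫ y, |f y|) - ∫ y in ball 0 ρ, |f y| :=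
      eq_sub_of_add_eq' (integral_add_compl measurableSet_ball hf.abs)
    have hmiss : ball x r ⊆ (ball 0 ρ)ᶜ := fun y hy => by
      rw [mem_ball, dist_eq_norm] at hy
      rw [mem_compl_iff, mem_ball, dist_zero_right, not_lt]
      linarith [norm_sub_norm_le x y, norm_sub_rev x y]
    calc contAvg d f r x ≤ (∫ y in (ball 0 ρ)ᶜ, |f y|) / ((δ * ‖x‖) ^ d * c) :=
          contAvg_le_of_ball_subset hd hf (by positivity) hr hmiss
      _ < _ := by rw [hscale, ← div_div, htail]; exact div_lt_div_of_pos_right hmid hN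
  · have hr' : (1 + δ) * ‖x‖ ≤ r := not_lt.1 fun h => hwin ⟨hfar', h⟩
    calc contAvg d f r x ≤ (∫ y in univ, |f y|) / (((1 + δ) * ‖x‖) ^ d * c) :=
          contAvg_le_of_ball_subset hd hf (by positivity) hr' (subset_univ _)
      _ < _ := by
        rw [hscale, ← div_div, setIntegral_univ]; exact div_lt_div_of_pos_right hfar hN

lemma eventually_contFreq_lt_or_mem_Ico (hd : 0 < d) (hf : Integrable f volume)
    (hI : 0 < ∫ y, |f y|) {δ : ℝ} (hδ : 0 < δ) :
    ∀ᶠ x in Bornology.cobounded (EuclideanSpace ℝ (Fin d)),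
      contFreq d f x < δ * ‖x‖ ∨ contFreq d f x ∈ Ico ((1 - δ) * ‖x‖) ((1 + δ) * ‖x‖) := by
  obtain ⟨ρ, hρ, hmid, hfar⟩ := exists_ball_mass_concentrated hd hf hI hδ
  filter_upwards [tendsto_norm_cobounded_atTop.eventually_gt_atTop (max (2 * ρ / δ) 0)]
    with x hx
  have hx0 : 0 < ‖x‖ := (le_max_right _ _).trans_lt hx
  have hρx : ρ ≤ δ / 2 * ‖x‖ := by
    have := (div_lt_iff₀ hδ).1 ((le_max_left _ _).trans_lt hx)
    linarith
  exact contFreq_lt_or_mem_Ico hf (by positivity) (by positivity) fun r hr hwin =>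
    contAvg_lt_of_mass_concentrated hd hf hδ hρ hx0 hρx hmid hfar hr hwin

end

theorem stmt6 (d : ℕ) (f : EuclideanSpace ℝ (Fin d) → ℝ) (hf : Integrable f volume)
    (ε : ℝ) (hε : 0 < ε) :
    Bornology.IsBounded {x : EuclideanSpace ℝ (Fin d) |
      contFreq d f x / ‖x‖ ∉ Set.Ico (0 : ℝ) ε ∪ Set.Ioo (1 - ε) (1 + ε)} := by
  suffices h : ∀ᶠ x in Bornology.cobounded _,
      contFreq d f x / ‖x‖ ∈ Ico (0 : ℝ) ε ∪ Ioo (1 - ε) (1 + ε) by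
    exact Bornology.isBounded_def.2 (h.mono fun x hx hnot => hnot hx)
  have hnonneg : ∀ x, 0 ≤ contFreq d f x / ‖x‖ := fun x =>
    div_nonneg contFreq_nonneg (norm_nonneg x)
  rcases Nat.eq_zero_or_pos d with rfl | hd
  · refine Eventually.of_forall fun x => Or.inl ⟨hnonneg x, ?_⟩
    rwa [Subsingleton.elim x 0, norm_zero, div_zero]
  rcases (integral_nonneg fun y => abs_nonneg (f y) : 0 ≤ ∫ y, |f y|).eq_or_lt with hI | hI
  · refine Eventually.of_forall fun x => Or.inl ⟨hnonneg x, ?_⟩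
    rwa [contFreq_eq_zero_of_integral_abs_eq_zero hf hI.symm, zero_div]
  filter_upwards [eventually_contFreq_lt_or_mem_Ico hd hf hI (half_pos hε),
    tendsto_norm_cobounded_atTop.eventually_gt_atTop 0] with x hfreq hx
  have hεx := mul_pos hε hx
  rcases hfreq with hsmall | ⟨hge, hlt⟩
  · exact Or.inl ⟨hnonneg x, (div_lt_iff₀ hx).2 (by linarith)⟩
  · exact Or.inr ⟨(lt_div_iff₀ hx).2 (by linarith), (div_lt_iff₀ hx).2 (by linarith)⟩
end

section
/- Let f ∈ L¹(ℝ^d) with f not identically zero, and suppose the set {x : r_x/|x| ∈ [ε, 1-ε]} contains a sequence (x_k) with (2-ε)|x_k| < ε|x_{k+1}| for all k and |x_1| large enough that ∫_{B_{|x_1|}(0)} |f| ≥ ‖f‖₁/2. Then ∫_{U_k} |f| dμ ≥ (ε^d / 2^{d+1}) ‖f‖₁ for every k, where U_k = {y : ε|x_k| ≤ |y| ≤ (2-ε)|x_k|}; since the U_k are pairwise disjoint this contradicts f ∈ L¹. -/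
open MeasureTheory

theorem stmt7 (d : ℕ) (f : EuclideanSpace ℝ (Fin d) → ℝ) (hf : Integrable f volume)
    (hf0 : ¬ (f =ᵐ[volume] 0)) (ε : ℝ) (hε0 : 0 < ε) (hε : ε < 1 / 2)
    (x : ℕ → EuclideanSpace ℝ (Fin d))
    (hxset : ∀ k, ε ≤ contFreq d f (x k) / ‖x k‖ ∧ contFreq d f (x k) / ‖x k‖ ≤ 1 - ε)
    (hsep : ∀ k, (2 - ε) * ‖x k‖ < ε * ‖x (k + 1)‖)
    (hx0 : (∫ y, |f y|) / 2 ≤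
      ∫ y in Metric.ball (0 : EuclideanSpace ℝ (Fin d)) ‖x 0‖, |f y|) :
    ∀ k, (ε ^ d / 2 ^ (d + 1)) * ∫ y, |f y| ≤
      ∫ y in {y : EuclideanSpace ℝ (Fin d) |
        ε * ‖x k‖ ≤ ‖y‖ ∧ ‖y‖ ≤ (2 - ε) * ‖x k‖}, |f y| := by
  intro k
  set I := ∫ y, |f y| with hI
  have hfabs : Integrable (fun y => |f y|) volume := hf.abs
  have hInn : 0 ≤ I := integral_nonneg fun y => abs_nonneg _
  have hI0 : 0 < I := by
    rcases hInn.eq_or_lt with h | h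
    · exfalso
      apply hf0
      have h0 : (fun y => |f y|) =ᵐ[volume] 0 :=
        (integral_eq_zero_iff_of_nonneg (fun y => abs_nonneg _) hfabs).mp h.symm
      filter_upwards [h0] with y hy
      simpa [abs_eq_zero] using hy
    · exact h
  have hnorm : ∀ j, 0 < ‖x j‖ := by
    intro j
    rcases (norm_nonneg (x j)).eq_or_lt with h | h
    · exfalso
      have h1 := (hxset j).1
      rw [← h, div_zero] at h1
      linarith
    · exact h
  have hmono : ∀ j, ‖x j‖ ≤ ‖x (j + 1)‖ := by
    intro j
    nlinarith [hsep j, hnorm j, hnorm (j + 1)]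
  have hx0k : ‖x 0‖ ≤ ‖x k‖ := by
    induction k with
    | zero => exact le_refl _
    | succ m ih => exact ih.trans (hmono m)
  set n := ‖x k‖ with hn
  have hnpos : 0 < n := hnorm k
  set rk := contFreq d f (x k) with hrk
  have hrk1 : ε * n ≤ rk := by
    have h1 := (hxset k).1
    rwa [le_div_iff₀ hnpos] at h1
  have hrk2 : rk ≤ (1 - ε) * n := by
    have h1 := (hxset k).2
    rw [div_le_iff₀ hnpos] at h1
    linarith [h1]
  set S : Set ℝ := {r | 0 < r ∧ contMax d f (x k) = contAvg d f r (x k)} with hS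
  have hrkInf : rk = sInf S := rfl
  have hSne : S.Nonempty := by
    by_contra h
    rw [Set.not_nonempty_iff_eq_empty] at h
    have h0 : rk = 0 := by rw [hrkInf, h, Real.sInf_empty]
    nlinarith
  have hSbdd : BddBelow S := ⟨0, fun r hr => hr.1.le⟩
  have hSge : ∀ r ∈ S, ε * n ≤ r := fun r hr =>
    hrk1.trans (hrkInf ▸ csInf_le hSbdd hr)
  -- volumes of balls
  set V := (volume (Metric.ball (0 : EuclideanSpace ℝ (Fin d)) 1)).toReal with hV
  have hVpos : 0 < V :=
    ENNReal.toReal_pos (Metric.measure_ball_pos volume _ one_pos).ne' measure_ball_lt_top.ne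
  have hvol : ∀ (y : EuclideanSpace ℝ (Fin d)) (r : ℝ), 0 < r →
      (volume (Metric.ball y r)).toReal = r ^ d * V := by
    intro y r hr
    rw [Measure.addHaar_ball_of_pos volume y hr, finrank_euclideanSpace_fin,
      ENNReal.toReal_mul, ENNReal.toReal_ofReal (by positivity)]
  have hle_I : ∀ (y : EuclideanSpace ℝ (Fin d)) (r : ℝ),
      ∫ z in Metric.ball y r, |f z| ≤ I :=
    fun y r => setIntegral_le_integral hfabs (ae_of_all _ fun z => abs_nonneg _)
  have hball_nonneg : ∀ (y : EuclideanSpace ℝ (Fin d)) (r : ℝ),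
      0 ≤ ∫ z in Metric.ball y r, |f z| :=
    fun y r => setIntegral_nonneg measurableSet_ball fun z _ => abs_nonneg _
  set M := contMax d f (x k) with hM
  obtain ⟨r0, hr0⟩ := hSne
  have hbdd : BddAbove ((fun r => contAvg d f r (x k)) '' Set.Ioi (0 : ℝ)) := by
    by_contra hb
    have hM0 : M = 0 := by rw [hM, contMax, Real.sSup_of_not_bddAbove hb]
    have hvr0 : (volume (Metric.ball (x k) r0)).toReal = r0 ^ d * V := hvol _ _ hr0.1
    have hvr0pos : (0 : ℝ) < r0 ^ d * V := mul_pos (pow_pos hr0.1 d) hVpos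
    have h0 : ∫ z in Metric.ball (x k) r0, |f z| = 0 := by
      have h1 := hr0.2
      rw [← hM, hM0] at h1
      simp only [contAvg, hvr0] at h1
      exact (div_eq_zero_iff.mp h1.symm).resolve_right hvr0pos.ne'
    apply hb
    refine ⟨I / (r0 ^ d * V), ?_⟩
    rintro v ⟨r, hr, rfl⟩
    simp only [Set.mem_Ioi] at hr
    rcases le_or_gt r r0 with h | h
    · have hle : ∫ z in Metric.ball (x k) r, |f z| ≤ 0 := by
        rw [← h0]
        exact setIntegral_mono_set hfabs.integrableOn
          (ae_of_all _ fun z => abs_nonneg _)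
          (HasSubset.Subset.eventuallyLE (Metric.ball_subset_ball h))
      have heq : ∫ z in Metric.ball (x k) r, |f z| = 0 :=
        le_antisymm hle (hball_nonneg _ _)
      simp only [contAvg, heq, zero_div]
      exact div_nonneg hInn hvr0pos.le
    · simp only [contAvg, hvol _ _ (hr0.1.trans h)]
      exact div_le_div₀ hInn (hle_I _ _) hvr0pos
        (mul_le_mul_of_nonneg_right (pow_le_pow_left₀ hr0.1.le h.le d) hVpos.le)
  have hup : contAvg d f (2 * n) (x k) ≤ M :=
    le_csSup hbdd ⟨2 * n, Set.mem_Ioi.mpr (by positivity), rfl⟩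
  have hlow : I / 2 / ((2 * n) ^ d * V) ≤ contAvg d f (2 * n) (x k) := by
    rw [contAvg, hvol _ _ (by positivity)]
    have hsub : Metric.ball (0 : EuclideanSpace ℝ (Fin d)) ‖x 0‖ ⊆
        Metric.ball (x k) (2 * n) := by
      intro y hy
      rw [Metric.mem_ball] at hy ⊢
      have h1 : dist y (x k) ≤ dist y 0 + dist (0 : EuclideanSpace ℝ (Fin d)) (x k) :=
        dist_triangle _ _ _
      have h2 : dist y (0 : EuclideanSpace ℝ (Fin d)) = ‖y‖ := by simp
      have h3 : dist (0 : EuclideanSpace ℝ (Fin d)) (x k) = ‖x k‖ := by simp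
      rw [h2, h3] at h1
      have := dist_nonneg (x := y) (y := (0 : EuclideanSpace ℝ (Fin d)))
      linarith
    have hmono2 : ∫ z in Metric.ball (0 : EuclideanSpace ℝ (Fin d)) ‖x 0‖, |f z| ≤
        ∫ z in Metric.ball (x k) (2 * n), |f z| :=
      setIntegral_mono_set hfabs.integrableOn (ae_of_all _ fun z => abs_nonneg _)
        (HasSubset.Subset.eventuallyLE hsub)
    have hnum : I / 2 ≤ ∫ z in Metric.ball (x k) (2 * n), |f z| :=
      le_trans hx0 hmono2
    gcongr
  have hMlow : I / 2 / ((2 * n) ^ d * V) ≤ M := hlow.trans hup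
  set c := ε ^ d / 2 ^ (d + 1) * I with hc
  have hc0 : 0 < c := by positivity
  have hkey : ∀ r ∈ S, c ≤ ∫ z in Metric.ball (x k) r, |f z| := by
    intro r hr
    have hrpos := hr.1
    have hrge : ε * n ≤ r := hSge r hr
    have hvr : (volume (Metric.ball (x k) r)).toReal = r ^ d * V := hvol _ _ hrpos
    have hIr : ∫ z in Metric.ball (x k) r, |f z| = M * (r ^ d * V) := by
      have h1 : M = (∫ z in Metric.ball (x k) r, |f z|) / (r ^ d * V) := by
        rw [hM, hr.2]
        simp only [contAvg, hvr]
      rw [h1]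
      exact (div_mul_cancel₀ _ (mul_pos (pow_pos hrpos d) hVpos).ne').symm
    rw [hIr]
    have heq : I / 2 / ((2 * n) ^ d * V) * ((ε * n) ^ d * V) = c := by
      rw [hc, mul_pow, mul_pow]
      field_simp
      ring
    calc c = I / 2 / ((2 * n) ^ d * V) * ((ε * n) ^ d * V) := heq.symm
      _ ≤ I / 2 / ((2 * n) ^ d * V) * (r ^ d * V) := by
          apply mul_le_mul_of_nonneg_left _ (by positivity)
          exact mul_le_mul_of_nonneg_right (pow_le_pow_left₀ (by positivity) hrge d) hVpos.le
      _ ≤ M * (r ^ d * V) := mul_le_mul_of_nonneg_right hMlow (by positivity)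
  set s := (1 - ε) * n with hs
  have hspos : 0 < s := by nlinarith
  have hclosed : c ≤ ∫ z in Metric.closedBall (x k) s, |f z| := by
    by_contra hlt
    push_neg at hlt
    set ν := volume.withDensity (fun y => ENNReal.ofReal |f y|) with hν
    have hνeq : ∀ (t : Set (EuclideanSpace ℝ (Fin d))), MeasurableSet t →
        ν t = ENNReal.ofReal (∫ z in t, |f z|) := by
      intro t ht
      rw [hν, withDensity_apply _ ht,
        ← ofReal_integral_eq_lintegral_ofReal hfabs.integrableOn
          (ae_of_all _ fun z => abs_nonneg _)]
    -- the shrinking balls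
    have hinter : ⋂ m : ℕ, Metric.ball (x k) (s + 1 / (m + 1)) =
        Metric.closedBall (x k) s := by
      ext y
      simp only [Set.mem_iInter, Metric.mem_ball, Metric.mem_closedBall]
      constructor
      · intro h
        by_contra hgt
        push_neg at hgt
        obtain ⟨m, hm⟩ := exists_nat_one_div_lt (sub_pos.mpr hgt)
        have := h m
        linarith
      · intro h m
        have : (0 : ℝ) < 1 / (m + 1) := by positivity
        linarith
    have htend : Filter.Tendsto (fun m : ℕ => ν (Metric.ball (x k) (s + 1 / (m + 1))))
        Filter.atTop (nhds (ν (Metric.closedBall (x k) s))) := by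
      rw [← hinter]
      apply tendsto_measure_iInter_atTop
        (fun m => measurableSet_ball.nullMeasurableSet)
      · intro a b hab
        apply Metric.ball_subset_ball
        have hcast : (a : ℝ) ≤ (b : ℝ) := Nat.cast_le.mpr hab
        have h1 : (1 : ℝ) / ((b : ℝ) + 1) ≤ 1 / ((a : ℝ) + 1) :=
          one_div_le_one_div_of_le (by positivity) (by linarith)
        linarith
      · refine ⟨0, ?_⟩
        rw [hνeq _ measurableSet_ball]
        exact ENNReal.ofReal_ne_top
    have hcb_lt : ν (Metric.closedBall (x k) s) < ENNReal.ofReal c := by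
      rw [hνeq _ measurableSet_closedBall]
      exact (ENNReal.ofReal_lt_ofReal_iff hc0).mpr hlt
    have hev := htend.eventually_lt_const hcb_lt
    obtain ⟨N, hN⟩ := hev.exists
    set r1 := s + 1 / ((N : ℝ) + 1) with hr1def
    have hr1s : s < r1 := by
      rw [hr1def]
      have : (0 : ℝ) < 1 / ((N : ℝ) + 1) := by positivity
      linarith
    have hr1lt : ∫ z in Metric.ball (x k) r1, |f z| < c := by
      have h1 : ENNReal.ofReal (∫ z in Metric.ball (x k) r1, |f z|) < ENNReal.ofReal c := by
        rw [← hνeq _ measurableSet_ball]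
        exact hN
      exact (ENNReal.ofReal_lt_ofReal_iff_of_nonneg (hball_nonneg _ _)).mp h1
    obtain ⟨r', hr'S, hr'lt⟩ : ∃ r' ∈ S, r' < r1 := by
      apply exists_lt_of_csInf_lt ⟨r0, hr0⟩
      calc sInf S = rk := hrkInf.symm
        _ ≤ s := hrk2
        _ < r1 := hr1s
    have h1 : c ≤ ∫ z in Metric.ball (x k) r', |f z| := hkey r' hr'S
    have h2 : ∫ z in Metric.ball (x k) r', |f z| ≤ ∫ z in Metric.ball (x k) r1, |f z| :=
      setIntegral_mono_set hfabs.integrableOn (ae_of_all _ fun z => abs_nonneg _)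
        (HasSubset.Subset.eventuallyLE (Metric.ball_subset_ball hr'lt.le))
    linarith
  have hsub2 : Metric.closedBall (x k) s ⊆
      {y : EuclideanSpace ℝ (Fin d) | ε * n ≤ ‖y‖ ∧ ‖y‖ ≤ (2 - ε) * n} := by
    intro y hy
    rw [Metric.mem_closedBall, dist_eq_norm] at hy
    have h2 : ‖x k‖ - ‖y‖ ≤ ‖y - x k‖ := by
      rw [norm_sub_rev]
      exact norm_sub_norm_le _ _
    have h3 : ‖y‖ - ‖x k‖ ≤ ‖y - x k‖ := norm_sub_norm_le _ _
    have hsn : s = n - ε * n := by rw [hs]; ring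
    have h2n : (2 - ε) * n = n + s := by rw [hs]; ring
    rw [← hn] at h2 h3
    constructor
    · linarith
    · linarith
  calc (ε ^ d / 2 ^ (d + 1)) * I = c := hc.symm
    _ ≤ ∫ z in Metric.closedBall (x k) s, |f z| := hclosed
    _ ≤ ∫ y in {y : EuclideanSpace ℝ (Fin d) |
        ε * ‖x k‖ ≤ ‖y‖ ∧ ‖y‖ ≤ (2 - ε) * ‖x k‖}, |f y| :=
      setIntegral_mono_set hfabs.integrableOn (ae_of_all _ fun z => abs_nonneg _)
        (HasSubset.Subset.eventuallyLE hsub2)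
end

section
/- Let f = ∑_{k≥2} 𝟙_{I_k} where N_1 = 2, N_{k+1} = N_k^{10}, L_k = ⌊N_k/3⌋, and I_k = [N_k+1, N_k+L_k] ∩ ℤ. Then f ∈ ℓ^∞(ℤ), and there exists K such that for all k ≥ K the discrete frequency function satisfies r_{N_k} = L_k; consequently r_{N_k}/N_k → 1/3 and the set { n ∈ ℤ : r_n/|n| ∈ [1/4, 3/4] } is infinite. -/
/-!
Put `N = N_{m+1}`, `P = N_m` and `L = L_{m+1}`, and let `c(r)` count the points of the blocks in
the window `[N - r, N + r]`, so that `A_r f(N) = c(r) / (2r + 1)`. As long as the window misses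
the earlier blocks (all below `2P`), `c(r) = min(r, L)`, and `min(r, L) / (2r + 1)` is maximal
exactly at `r = L`. Once it reaches them, `r ≥ N - 2P ≈ 3L` while `c(r) ≤ L + 2P`, and `P` is
negligible against `L`. Once it reaches the next block `N^10`, the density of the blocks on
`[1, M]`, at most `2/3`, keeps the average near `1/3 < L / (2L + 1)`.
-/

open scoped BigOperators
open Filter

/-- The sparse sequence `N_1 = 2`, `N_{k+1} = N_k ^ 10` (indexed from `0`, so
`Nseq 0 = 2` plays the role of `N_1`, and `Nseq 1 = 2 ^ 10` that of `N_2`). -/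
def Nseq : ℕ → ℕ
  | 0 => 2
  | k + 1 => (Nseq k) ^ 10

/-- `L_k = ⌊N_k / 3⌋` (natural number division). -/
def Lseq (k : ℕ) : ℕ := Nseq k / 3

open Finset
open scoped Classical Topology

theorem Set.infinite_of_eventually_mem {α : Type*} {s : Set α} {g : ℕ → α}
    (hg : Function.Injective g) (h : ∀ᶠ k in atTop, g k ∈ s) : s.Infinite :=
  Set.infinite_of_injOn_mapsTo hg.injOn (fun _ hk => hk)
    (Nat.frequently_atTop_iff_infinite.1 h.frequently)

theorem discFreq_eq_of_forall_le_of_forall_lt {f : ℤ → ℝ} {n : ℤ} {r₀ : ℕ}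
    (hle : ∀ r, discAvg f r n ≤ discAvg f r₀ n)
    (hlt : ∀ r < r₀, discAvg f r n < discAvg f r₀ n) :
    discFreq f n = r₀ := by
  have hmax : discMax f n = discAvg f r₀ n :=
    le_antisymm (ciSup_le hle) (le_ciSup ⟨_, Set.forall_mem_range.2 hle⟩ r₀)
  rw [discFreq, hmax]
  exact le_antisymm (Nat.sInf_le rfl)
    (le_csInf ⟨r₀, rfl⟩ fun r hr => not_lt.1 fun h => (hlt r h).ne hr.symm)

noncomputable def windowCount (s : Set ℤ) (r : ℕ) (n : ℤ) : ℕ :=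
  #{x ∈ Icc (n - r) (n + r) | x ∈ s}

theorem discAvg_indicator_one (s : Set ℤ) (r : ℕ) (n : ℤ) :
    discAvg (s.indicator fun _ => 1) r n = windowCount s r n / (2 * r + 1) := by
  rw [discAvg, windowCount, natCast_card_filter, sub_eq_add_neg, ← map_add_left_Icc, sum_map]
  congr 1
  refine sum_congr rfl fun j _ => ?_
  by_cases h : n + j ∈ s <;> simp [h]

theorem two_le_Nseq (k : ℕ) : 2 ≤ Nseq k := by
  induction k with
  | zero => rfl
  | succ k ih => exact ih.trans (Nat.le_self_pow (by norm_num) _)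

theorem mul_sq_Nseq_le (k : ℕ) : 256 * Nseq k ^ 2 ≤ Nseq (k + 1) := by
  have h8 : 2 ^ 8 ≤ Nseq k ^ 8 := Nat.pow_le_pow_left (two_le_Nseq k) 8
  calc 256 * Nseq k ^ 2 ≤ Nseq k ^ 8 * Nseq k ^ 2 := Nat.mul_le_mul_right _ h8
    _ = Nseq (k + 1) := by rw [Nseq]; ring

theorem mul_Nseq_le (k : ℕ) : 512 * Nseq k ≤ Nseq (k + 1) := by
  nlinarith [mul_sq_Nseq_le k, two_le_Nseq k]

theorem Nseq_strictMono : StrictMono Nseq :=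
  strictMono_nat_of_lt_succ fun k => by have := mul_Nseq_le k; have := two_le_Nseq k; omega

theorem sum_range_Nseq_le (J : ℕ) : ∑ j ∈ range J, Nseq j ≤ Nseq J := by
  induction J with
  | zero => simp
  | succ J ih => rw [sum_range_succ]; have := mul_Nseq_le J; omega

theorem sum_Nseq_le_two_mul {s : Finset ℕ} {M : ℕ} (hs : ∀ k ∈ s, Nseq k < M) :
    ∑ k ∈ s, Nseq k ≤ 2 * M := by
  rcases s.eq_empty_or_nonempty with rfl | hne
  · simp
  have hJ := hs _ (s.max'_mem hne)
  calc ∑ k ∈ s, Nseq k ≤ ∑ k ∈ range (s.max' hne + 1), Nseq k :=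
        sum_le_sum_of_subset fun k hk => mem_range.2 (Nat.lt_succ_of_le (s.le_max' k hk))
    _ = ∑ k ∈ range (s.max' hne), Nseq k + Nseq (s.max' hne) := sum_range_succ _ _
    _ ≤ 2 * M := by have := sum_range_Nseq_le (s.max' hne); omega

theorem three_mul_Lseq_le (k : ℕ) : 3 * Lseq k ≤ Nseq k := by unfold Lseq; omega

theorem Nseq_le_three_mul_Lseq_add_two (k : ℕ) : Nseq k ≤ 3 * Lseq k + 2 := by
  unfold Lseq; omega

theorem tendsto_Lseq_div_Nseq :
    Tendsto (fun k => (Lseq k : ℝ) / Nseq k) atTop (𝓝 (1 / 3)) := by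
  have hN : Tendsto (fun k => (Nseq k : ℝ)) atTop atTop :=
    tendsto_natCast_atTop_atTop.comp Nseq_strictMono.tendsto_atTop
  refine ((tendsto_nat_floor_mul_div_atTop (by norm_num)).comp hN).congr fun k => ?_
  simp [Lseq, ← Nat.floor_div_eq_div (K := ℝ), div_eq_inv_mul]

def blockSet : Set ℤ :=
  {n : ℤ | ∃ k : ℕ, 1 ≤ k ∧ (Nseq k : ℤ) + 1 ≤ n ∧ n ≤ (Nseq k : ℤ) + (Lseq k : ℤ)}

theorem one_le_of_mem_blockSet {x : ℤ} (hx : x ∈ blockSet) : 1 ≤ x := by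
  obtain ⟨k, -, hlo, -⟩ := hx
  omega

theorem mem_blockSet_le_Nseq {x : ℤ} {m : ℕ} (hx : x ∈ blockSet) (hxm : x ≤ Nseq (m + 2)) :
    (1 ≤ x ∧ x ≤ 2 * Nseq m) ∨ (Nseq (m + 1) < x ∧ x ≤ Nseq (m + 1) + Lseq (m + 1)) := by
  obtain ⟨k, -, hlo, hhi⟩ := hx
  rcases lt_trichotomy k (m + 1) with hk | rfl | hk
  · have := Nseq_strictMono.monotone (Nat.lt_succ_iff.1 hk)
    have := three_mul_Lseq_le k
    omega
  · omega
  · have : Nseq (m + 2) ≤ Nseq k := Nseq_strictMono.monotone hk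
    omega

theorem three_mul_card_blockSet_le (M : ℕ) :
    3 * #{x ∈ Icc (1 : ℤ) M | x ∈ blockSet} ≤ 2 * M := by
  set F := {k ∈ range M | Nseq k < M}
  have hsub : {x ∈ Icc (1 : ℤ) M | x ∈ blockSet} ⊆
      F.biUnion fun k => Ioc (Nseq k : ℤ) (Nseq k + Lseq k) := by
    intro x hx
    obtain ⟨hxM, k, -, hlo, hhi⟩ := mem_filter.1 hx
    have : k ≤ Nseq k := Nseq_strictMono.id_le k
    rw [mem_Icc] at hxM
    exact mem_biUnion.2
      ⟨k, mem_filter.2 ⟨mem_range.2 (by omega), by omega⟩, mem_Ioc.2 ⟨by omega, hhi⟩⟩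
  have hcard : #{x ∈ Icc (1 : ℤ) M | x ∈ blockSet} ≤ ∑ k ∈ F, Lseq k := by
    refine (card_le_card hsub).trans (card_biUnion_le.trans_eq (sum_congr rfl fun k _ => ?_))
    rw [Int.card_Ioc]
    omega
  have hL : 3 * ∑ k ∈ F, Lseq k ≤ ∑ k ∈ F, Nseq k := by
    rw [mul_sum]
    exact sum_le_sum fun k _ => three_mul_Lseq_le k
  have hN : ∑ k ∈ F, Nseq k ≤ 2 * M := sum_Nseq_le_two_mul fun k hk => (mem_filter.1 hk).2
  omega

theorem three_mul_windowCount_blockSet_le (r n : ℕ) :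
    3 * windowCount blockSet r n ≤ 2 * (n + r) := by
  refine le_trans (Nat.mul_le_mul_left 3 (card_le_card fun x hx => ?_))
    (three_mul_card_blockSet_le (n + r))
  obtain ⟨hx, hxs⟩ := mem_filter.1 hx
  have := one_le_of_mem_blockSet hxs
  rw [mem_Icc] at hx
  exact mem_filter.2 ⟨mem_Icc.2 ⟨this, by push_cast; omega⟩, hxs⟩

theorem windowCount_blockSet_eq_min {m r : ℕ} (hr : r + 2 * Nseq m < Nseq (m + 1)) :
    windowCount blockSet r (Nseq (m + 1)) = min r (Lseq (m + 1)) := by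
  have hnext : 512 * Nseq (m + 1) ≤ Nseq (m + 2) := mul_Nseq_le (m + 1)
  have hwindow : {x ∈ Icc ((Nseq (m + 1) : ℤ) - r) (Nseq (m + 1) + r) | x ∈ blockSet} =
      Ioc (Nseq (m + 1) : ℤ) (Nseq (m + 1) + min r (Lseq (m + 1))) := by
    ext x
    simp only [mem_filter, mem_Icc, mem_Ioc]
    constructor
    · rintro ⟨⟨hlo, hhi⟩, hx⟩
      rcases mem_blockSet_le_Nseq (m := m) hx (by omega) with h | h <;> omega
    · rintro ⟨hlo, hhi⟩
      exact ⟨⟨by omega, by omega⟩, m + 1, by omega, by omega, by omega⟩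
  rw [windowCount, hwindow, Int.card_Ioc]
  omega

theorem windowCount_blockSet_Lseq (m : ℕ) :
    windowCount blockSet (Lseq (m + 1)) (Nseq (m + 1)) = Lseq (m + 1) := by
  have := three_mul_Lseq_le (m + 1)
  have := mul_Nseq_le m
  have := two_le_Nseq m
  simpa using windowCount_blockSet_eq_min (m := m) (r := Lseq (m + 1)) (by omega)

theorem windowCount_blockSet_le {m r : ℕ} (hr : Nseq (m + 1) + r ≤ Nseq (m + 2)) :
    windowCount blockSet r (Nseq (m + 1)) ≤ 2 * Nseq m + Lseq (m + 1) := by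
  have hsub : {x ∈ Icc ((Nseq (m + 1) : ℤ) - r) (Nseq (m + 1) + r) | x ∈ blockSet} ⊆
      Icc 1 (2 * Nseq m : ℤ) ∪ Ioc (Nseq (m + 1) : ℤ) (Nseq (m + 1) + Lseq (m + 1)) := by
    intro x hx
    obtain ⟨hx, hxs⟩ := mem_filter.1 hx
    rw [mem_Icc] at hx
    rw [mem_union, mem_Icc, mem_Ioc]
    exact mem_blockSet_le_Nseq hxs (by omega)
  refine (card_le_card hsub).trans ((card_union_le _ _).trans ?_)
  rw [Int.card_Icc, Int.card_Ioc]
  omega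

theorem windowCount_blockSet_mul_le (m r : ℕ) :
    windowCount blockSet r (Nseq (m + 1)) * (2 * Lseq (m + 1) + 1) ≤
      Lseq (m + 1) * (2 * r + 1) := by
  set P := Nseq m
  set N := Nseq (m + 1)
  set L := Lseq (m + 1)
  have hP := two_le_Nseq m
  have hPN := mul_Nseq_le m
  have hNN := mul_sq_Nseq_le (m + 1)
  have hLN := three_mul_Lseq_le (m + 1)
  have hNL := Nseq_le_three_mul_Lseq_add_two (m + 1)
  rcases lt_or_ge (r + 2 * P) N with hclean | hmid
  · rw [windowCount_blockSet_eq_min hclean]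
    rcases le_total r L with h | h
    · rw [min_eq_left h]; nlinarith
    · rw [min_eq_right h]; nlinarith
  rcases le_or_gt (N + r) (Nseq (m + 2)) with hnear | hfar
  · calc windowCount blockSet r N * (2 * L + 1) ≤ (2 * P + L) * (2 * L + 1) :=
          Nat.mul_le_mul_right _ (windowCount_blockSet_le hnear)
      _ ≤ L * (2 * r + 1) := by nlinarith
  · have := three_mul_windowCount_blockSet_le r N
    nlinarith

theorem windowCount_blockSet_mul_lt {m r : ℕ} (hr : r < Lseq (m + 1)) :
    windowCount blockSet r (Nseq (m + 1)) * (2 * Lseq (m + 1) + 1) <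
      Lseq (m + 1) * (2 * r + 1) := by
  have := three_mul_Lseq_le (m + 1)
  have := mul_Nseq_le m
  have := two_le_Nseq m
  rw [windowCount_blockSet_eq_min (by omega), min_eq_left hr.le]
  nlinarith

theorem discFreq_indicator_blockSet (m : ℕ) :
    discFreq (blockSet.indicator fun _ => 1) (Nseq (m + 1)) = Lseq (m + 1) := by
  apply discFreq_eq_of_forall_le_of_forall_lt <;> intro r <;>
    rw [discAvg_indicator_one, discAvg_indicator_one, windowCount_blockSet_Lseq]
  · rw [div_le_div_iff₀ (by positivity) (by positivity)]
    exact_mod_cast windowCount_blockSet_mul_le m r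
  · intro hr
    rw [div_lt_div_iff₀ (by positivity) (by positivity)]
    exact_mod_cast windowCount_blockSet_mul_lt hr

theorem stmt18
    (f : ℤ → ℝ)
    (hf : f = Set.indicator {n : ℤ | ∃ k : ℕ, 1 ≤ k ∧
      (Nseq k : ℤ) + 1 ≤ n ∧ n ≤ (Nseq k : ℤ) + (Lseq k : ℤ)} fun _ => (1 : ℝ)) :
    (∃ Cb : ℝ, ∀ n, |f n| ≤ Cb) ∧
    (∃ K : ℕ, ∀ k, K ≤ k → discFreq f (Nseq k) = Lseq k) ∧
    Tendsto (fun k : ℕ => (Lseq k : ℝ) / (Nseq k : ℝ)) atTop (nhds (1 / 3)) ∧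
    {n : ℤ | (1 : ℝ) / 4 ≤ (discFreq f n : ℝ) / |(n : ℝ)| ∧
      (discFreq f n : ℝ) / |(n : ℝ)| ≤ 3 / 4}.Infinite := by
  replace hf : f = blockSet.indicator fun _ => 1 := hf
  subst hf
  have hfreq : ∀ k, 1 ≤ k → discFreq (blockSet.indicator fun _ => 1) (Nseq k) = Lseq k := by
    rintro (_ | m) hk
    · omega
    · exact discFreq_indicator_blockSet m
  refine ⟨⟨1, fun n => ?_⟩, ⟨1, hfreq⟩, tendsto_Lseq_div_Nseq,
    Set.infinite_of_eventually_mem (g := fun k => (Nseq k : ℤ))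
      (Nat.cast_injective.comp Nseq_strictMono.injective) ?_⟩
  · by_cases h : n ∈ blockSet <;> simp [h]
  filter_upwards [eventually_ge_atTop 1, tendsto_Lseq_div_Nseq.eventually
    (Icc_mem_nhds (by norm_num : (1 : ℝ) / 4 < 1 / 3) (by norm_num : (1 : ℝ) / 3 < 3 / 4))]
    with k hk hratio
  simpa [hfreq k hk] using hratio
end

section
/- For each p ∈ (1, ∞] there exist ε ∈ (0, 1/2) and a function f ∈ ℓ^p(ℤ) such that the set { n ∈ ℤ : r_n/|n| ∈ [ε, 1-ε] } is unbounded. (For 1 < p < ∞ one may take f(n) = n^{-α} ∑_k 𝟙_{I_k}(n) with αp > 1 and suitable sparse blocks I_k; for p = ∞ take f = ∑_k 𝟙_{I_k}.) -/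
/-!
Take `f = γ ^ k` on the blocks `[B ^ k, 2 B ^ k)` and `0` elsewhere, with `γ ≤ 1/10`, `B γ ≥ 6`
and `B γ ^ p < 1` (the last makes `f ∈ ℓ^p`; for `p = ∞` it suffices that `γ ≤ 1`). At
`n = 3 B ^ k`, a window of radius `< B ^ k` lies in the gap `[2 B ^ k, B ^ (k+1))`, so its average
vanishes, while the radius `2 B ^ k` captures the whole `k`-th block, of mass `(B γ) ^ k`. Beyond
radius `5/2 B ^ k` the average is smaller: if the window meets no block past the `k`-th, the
geometric mass `∑_{j ≤ k} (B γ) ^ j` is too little for the larger window; if it reaches a block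
`J > k`, then `B ^ J` is at most the window length, so the average is `O((B γ) ^ J / B ^ J)`, which
is `O(γ ^ (k+1))`. Hence `B ^ k ≤ r_n ≤ 5/2 B ^ k`, i.e. `r_n / |n| ∈ [1/3, 5/6]`.
-/

open scoped BigOperators ENNReal

open Finset

theorem sum_Ico_consecutive' {α M : Type*} [LinearOrder α] [LocallyFiniteOrder α]
    [AddCommMonoid M] (f : α → M) {a b c : α} (hab : a ≤ b) (hbc : b ≤ c) :
    ∑ x ∈ Ico a b, f x + ∑ x ∈ Ico b c, f x = ∑ x ∈ Ico a c, f x := by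
  rw [← sum_union (Ico_disjoint_Ico_consecutive a b c), Ico_union_Ico_eq_Ico hab hbc]

theorem discAvg_eq_sum_Icc (f : ℤ → ℝ) (r : ℕ) (n : ℤ) :
    discAvg f r n = (∑ m ∈ Icc (n - r) (n + r), |f m|) / (2 * r + 1) := by
  rw [discAvg, sub_eq_add_neg, ← map_add_left_Icc, sum_map]
  rfl

theorem discFreq_mem_of_lt_discAvg {f : ℤ → ℝ} {n : ℤ} {r₀ : ℕ} {lo hi : ℝ}
    (hlo : ∀ r : ℕ, (r : ℝ) < lo → discAvg f r n < discAvg f r₀ n)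
    (hhi : ∀ r : ℕ, hi < r → discAvg f r n < discAvg f r₀ n) :
    lo ≤ discFreq f n ∧ (discFreq f n : ℝ) ≤ hi := by
  have hsmall : ∀ {r : ℕ}, (r : ℝ) ≤ hi → r ∈ range (⌊hi⌋₊ + 1) := fun hr =>
    mem_range_succ_iff.2 (Nat.le_floor hr)
  obtain ⟨r₁, -, hr₁⟩ := (range (⌊hi⌋₊ + 1)).exists_max_image (discAvg f · n) nonempty_range_add_one
  have hmax : ∀ r, discAvg f r n ≤ discAvg f r₁ n := by
    intro r
    by_cases hr : (r : ℝ) ≤ hi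
    · exact hr₁ r (hsmall hr)
    · have hr₀ : (r₀ : ℝ) ≤ hi := not_lt.1 fun h => (hhi r₀ h).false
      exact ((hhi r (not_le.1 hr)).trans_le (hr₁ r₀ (hsmall hr₀))).le
  have hsup : discMax f n = discAvg f r₁ n :=
    le_antisymm (ciSup_le hmax) (le_ciSup ⟨_, Set.forall_mem_range.2 hmax⟩ r₁)
  have hfreq : discMax f n = discAvg f (discFreq f n) n :=
    Nat.sInf_mem (s := {r | discMax f n = discAvg f r n}) ⟨r₁, hsup⟩
  have hge : discAvg f r₀ n ≤ discAvg f (discFreq f n) n := hfreq ▸ hsup ▸ hmax r₀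
  exact ⟨not_lt.1 fun h => (hlo _ h).not_ge hge, not_lt.1 fun h => (hhi _ h).not_ge hge⟩

/-- `γ ^ k` on each block `[B ^ k, 2 * B ^ k)`, and `0` off the blocks. -/
noncomputable def geomBlocks (B : ℕ) (γ : ℝ) (m : ℤ) : ℝ :=
  open scoped Classical in
  if ∃ k : ℕ, (B : ℤ) ^ k ≤ m ∧ m < 2 * (B : ℤ) ^ k then γ ^ Nat.log B m.toNat else 0

section geomBlocks

variable {B : ℕ} {γ : ℝ}

theorem geomBlocks_eq_pow (hB : 2 ≤ B) {k : ℕ} {m : ℤ} (h₁ : (B : ℤ) ^ k ≤ m)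
    (h₂ : m < 2 * (B : ℤ) ^ k) : geomBlocks B γ m = γ ^ k := by
  have hm : ((m.toNat : ℕ) : ℤ) = m := Int.toNat_of_nonneg ((pow_nonneg (by positivity) k).trans h₁)
  have hlog : Nat.log B m.toNat = k := by
    refine Nat.log_eq_of_pow_le_of_lt_pow ?_ ?_ <;> zify [hm]
    · exact h₁
    · rw [pow_succ]
      nlinarith [pow_nonneg (Int.natCast_nonneg B) k, (by exact_mod_cast hB : (2 : ℤ) ≤ B)]
  rw [geomBlocks, if_pos ⟨k, h₁, h₂⟩, hlog]

theorem geomBlocks_eq_zero {m : ℤ} (h : ∀ k : ℕ, (B : ℤ) ^ k ≤ m → 2 * (B : ℤ) ^ k ≤ m) :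
    geomBlocks B γ m = 0 := by
  rw [geomBlocks, if_neg]
  rintro ⟨k, h₁, h₂⟩
  exact (h k h₁).not_gt h₂

theorem geomBlocks_eq_zero_of_nonpos {m : ℤ} (hm : m ≤ 0) : geomBlocks B γ m = 0 :=
  geomBlocks_eq_zero fun k hk => by linarith [pow_nonneg (Int.natCast_nonneg B) k]

theorem geomBlocks_eq_zero_of_gap (hB : 1 ≤ B) {j : ℕ} {m : ℤ} (h₁ : 2 * (B : ℤ) ^ j ≤ m)
    (h₂ : m < (B : ℤ) ^ (j + 1)) : geomBlocks B γ m = 0 := by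
  refine geomBlocks_eq_zero fun k hk => h₁.trans' ?_
  have hkj : k ≤ j := by
    by_contra! hjk
    exact (pow_le_pow_right₀ (by exact_mod_cast hB) hjk).not_gt (hk.trans_lt h₂)
  gcongr
  exact_mod_cast hB

theorem geomBlocks_nonneg (hγ : 0 ≤ γ) (m : ℤ) : 0 ≤ geomBlocks B γ m := by
  unfold geomBlocks
  split_ifs
  exacts [pow_nonneg hγ _, le_rfl]

theorem sum_geomBlocks_block (hB : 2 ≤ B) (k : ℕ) :
    ∑ m ∈ Ico ((B : ℤ) ^ k) (2 * B ^ k), geomBlocks B γ m = (B * γ) ^ k := by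
  rw [sum_congr rfl fun m hm => geomBlocks_eq_pow hB (mem_Ico.1 hm).1 (mem_Ico.1 hm).2,
    sum_const, Int.card_Ico, nsmul_eq_mul, two_mul, add_sub_cancel_right, mul_pow]
  norm_cast

theorem sum_geomBlocks_Ico_one (hB : 2 ≤ B) (J : ℕ) :
    ∑ m ∈ Ico 1 ((B : ℤ) ^ J), geomBlocks B γ m = ∑ j ∈ range J, (B * γ) ^ j := by
  induction J with
  | zero => simp
  | succ J ih =>
    have hB' : (2 : ℤ) ≤ B := by exact_mod_cast hB
    have hpos : (1 : ℤ) ≤ (B : ℤ) ^ J := one_le_pow₀ (by omega)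
    rw [sum_range_succ, ← ih, ← sum_geomBlocks_block hB J,
      ← sum_Ico_consecutive' _ (by omega : (1 : ℤ) ≤ 2 * B ^ J)
        (by rw [pow_succ]; nlinarith : 2 * (B : ℤ) ^ J ≤ B ^ (J + 1)),
      ← sum_Ico_consecutive' _ (by omega : (1 : ℤ) ≤ B ^ J) (by omega : (B : ℤ) ^ J ≤ 2 * B ^ J),
      sum_eq_zero fun m hm =>
        geomBlocks_eq_zero_of_gap (by omega) (mem_Ico.1 hm).1 (mem_Ico.1 hm).2,
      add_zero]

theorem sum_geomBlocks_Icc_le (hB : 2 ≤ B) (hγ : 0 ≤ γ) {a b : ℤ} {J : ℕ} (hb : b < (B : ℤ) ^ J) :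
    ∑ m ∈ Icc a b, geomBlocks B γ m ≤ ∑ j ∈ range J, (B * γ) ^ j := by
  rw [← sum_geomBlocks_Ico_one hB J, ← sum_filter_of_ne (p := (0 < ·)) fun m _ hm =>
    not_le.1 fun h => hm (geomBlocks_eq_zero_of_nonpos h)]
  refine sum_le_sum_of_subset_of_nonneg (fun m hm => ?_) fun m _ _ => geomBlocks_nonneg hγ m
  simp only [mem_filter, mem_Icc, mem_Ico] at hm ⊢
  omega

theorem mul_sum_geomBlocks_Icc_le (hB : 2 ≤ B) (hγ : 0 ≤ γ) (hβ : 1 ≤ B * γ) {a b : ℤ} {J : ℕ}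
    (hb : b < (B : ℤ) ^ J) : (B * γ - 1) * ∑ m ∈ Icc a b, geomBlocks B γ m ≤ (B * γ) ^ J :=
  calc _ ≤ (B * γ - 1) * ∑ j ∈ range J, (B * γ) ^ j :=
        mul_le_mul_of_nonneg_left (sum_geomBlocks_Icc_le hB hγ hb) (by linarith)
    _ = (B * γ) ^ J - 1 := by rw [mul_comm, geom_sum_mul]
    _ ≤ (B * γ) ^ J := by linarith

theorem summable_geomBlocks (hB : 2 ≤ B) (hγ : 0 ≤ γ) (hβ : B * γ < 1) :
    Summable (geomBlocks B γ) := by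
  have hβ₀ : 0 ≤ B * γ := by positivity
  refine summable_of_sum_le (c := (1 - B * γ)⁻¹) (geomBlocks_nonneg hγ) fun u => ?_
  obtain ⟨a, ha⟩ := u.bddBelow
  obtain ⟨b, hb⟩ := u.bddAbove
  have hbJ : b < (B : ℤ) ^ b.toNat := by
    have := Nat.lt_pow_self (n := b.toNat) (by omega : 1 < B)
    zify at this
    omega
  calc ∑ m ∈ u, geomBlocks B γ m ≤ ∑ m ∈ Icc a b, geomBlocks B γ m :=
        sum_le_sum_of_subset_of_nonneg (fun m hm => mem_Icc.2 ⟨ha hm, hb hm⟩) fun m _ _ =>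
          geomBlocks_nonneg hγ m
    _ ≤ ∑ j ∈ range b.toNat, (B * γ) ^ j := sum_geomBlocks_Icc_le hB hγ hbJ
    _ ≤ ∑' j, (B * γ) ^ j := (summable_geometric_of_lt_one hβ₀ hβ).sum_le_tsum _ fun j _ => by
        positivity
    _ = (1 - B * γ)⁻¹ := tsum_geometric_of_lt_one hβ₀ hβ

theorem norm_rpow_geomBlocks (hγ : 0 ≤ γ) {q : ℝ} (hq : q ≠ 0) (m : ℤ) :
    ‖geomBlocks B γ m‖ ^ q = geomBlocks B (γ ^ q) m := by
  unfold geomBlocks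
  split_ifs
  · rw [Real.norm_of_nonneg (pow_nonneg hγ _), ← Real.rpow_pow_comm hγ]
  · simp [Real.zero_rpow hq]

theorem memℓp_geomBlocks (hB : 2 ≤ B) (hγ : 0 ≤ γ) {p : ℝ≥0∞} (hp : 0 < p.toReal)
    (h : B * γ ^ p.toReal < 1) : Memℓp (geomBlocks B γ) p :=
  memℓp_gen <| by
    simpa only [norm_rpow_geomBlocks hγ hp.ne'] using
      summable_geomBlocks hB (Real.rpow_nonneg hγ _) h

theorem memℓp_top_geomBlocks (hγ : 0 ≤ γ) (hγ' : γ ≤ 1) : Memℓp (geomBlocks B γ) ⊤ := by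
  refine memℓp_infty ⟨1, Set.forall_mem_range.2 fun m => ?_⟩
  rw [Real.norm_of_nonneg (geomBlocks_nonneg hγ m)]
  unfold geomBlocks
  split_ifs
  exacts [pow_le_one₀ hγ hγ', zero_le_one]

theorem discAvg_geomBlocks (hγ : 0 ≤ γ) (r : ℕ) (n : ℤ) :
    discAvg (geomBlocks B γ) r n = (∑ m ∈ Icc (n - r) (n + r), geomBlocks B γ m) / (2 * r + 1) := by
  simp only [discAvg_eq_sum_Icc, abs_of_nonneg (geomBlocks_nonneg hγ _)]

theorem discAvg_geomBlocks_eq_zero (hB : 4 ≤ B) {k r : ℕ} (hr : (r : ℤ) < B ^ k) :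
    discAvg (geomBlocks B γ) r (3 * B ^ k) = 0 := by
  have hgap : 4 * (B : ℤ) ^ k ≤ B ^ (k + 1) := by
    rw [pow_succ, mul_comm]
    gcongr
    exact_mod_cast hB
  rw [discAvg_eq_sum_Icc, sum_eq_zero fun m hm => ?_, zero_div]
  rw [mem_Icc] at hm
  rw [geomBlocks_eq_zero_of_gap (j := k) (by omega) (by omega) (by omega), abs_zero]

theorem pow_div_le_discAvg_geomBlocks (hB : 2 ≤ B) (hγ : 0 ≤ γ) (k : ℕ) :
    (B * γ) ^ k / (4 * B ^ k + 1) ≤ discAvg (geomBlocks B γ) (2 * B ^ k) (3 * B ^ k) := by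
  rw [discAvg_geomBlocks hγ, ← sum_geomBlocks_block hB k]
  push_cast
  rw [show (2 : ℝ) * (2 * B ^ k) + 1 = 4 * B ^ k + 1 by ring]
  gcongr ?_ / _
  refine sum_le_sum_of_subset_of_nonneg (fun m hm => ?_) fun m _ _ => geomBlocks_nonneg hγ m
  simp only [mem_Ico, mem_Icc] at hm ⊢
  omega

theorem discAvg_geomBlocks_lt (hB : 6 ≤ B) (hγ : 0 < γ) (hγ' : γ ≤ 1 / 10) (hβ : 6 ≤ B * γ)
    {k r : ℕ} (hr : 5 / 2 * (B : ℝ) ^ k < r) :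
    discAvg (geomBlocks B γ) r (3 * B ^ k) < (B * γ) ^ k / (4 * B ^ k + 1) := by
  set β : ℝ := B * γ
  set x : ℝ := (B : ℝ) ^ k
  have hx₁ : 1 ≤ x := one_le_pow₀ (by exact_mod_cast (by omega : 1 ≤ B))
  set S := ∑ m ∈ Icc ((3 * B ^ k : ℤ) - r) (3 * B ^ k + r), geomBlocks B γ m
  obtain ⟨J, hNJ, hNJ'⟩ : ∃ J, B ^ J ≤ 3 * B ^ k + r ∧ 3 * B ^ k + r < B ^ (J + 1) :=
    ⟨_, Nat.pow_log_le_self B (by positivity), Nat.lt_pow_succ_log_self (by omega) _⟩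
  have hkJ : k ≤ J :=
    Nat.lt_succ_iff.1 ((Nat.pow_lt_pow_iff_right (by omega)).1 (by omega : B ^ k < B ^ (J + 1)))
  have hmass : (β - 1) * S ≤ β ^ (J + 1) :=
    mul_sum_geomBlocks_Icc_le (by omega) hγ.le (by linarith) (by exact_mod_cast hNJ')
  rw [discAvg_geomBlocks hγ.le, div_lt_div_iff₀ (by positivity) (by positivity)]
  refine lt_of_mul_lt_mul_left ?_ (by linarith : 0 ≤ β - 1)
  rcases hkJ.eq_or_lt with rfl | hkJ
  · -- the window meets no block beyond the `k`-th
    have hβk : 0 < β ^ k := by positivity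
    calc (β - 1) * (S * (4 * x + 1)) ≤ β ^ (k + 1) * (4 * x + 1) := by
          rw [← mul_assoc]; gcongr
      _ = β ^ k * (β * (4 * x + 1)) := by ring
      _ < β ^ k * ((β - 1) * (2 * r + 1)) := mul_lt_mul_of_pos_left (by nlinarith) hβk
      _ = (β - 1) * (β ^ k * (2 * r + 1)) := by ring
  · -- the window reaches a block `J > k`, whose position bounds `B ^ J` by the radius
    have hr₃ : 3 * B ^ k ≤ r := by
      have : 6 * B ^ k ≤ B ^ J := calc
        6 * B ^ k ≤ B ^ k * B := by rw [mul_comm]; gcongr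
        _ ≤ B ^ J := by rw [← pow_succ]; exact Nat.pow_le_pow_right (by omega) hkJ
      omega
    have hBJ : (B : ℝ) ^ J ≤ 2 * r + 1 := by exact_mod_cast (by omega : B ^ J ≤ 2 * r + 1)
    have hγJ : γ ^ J ≤ γ * γ ^ k := by
      rw [← pow_succ']; exact pow_le_pow_of_le_one hγ.le (by linarith) hkJ
    have hβJ : β ^ (J + 1) ≤ β * ((2 * r + 1) * (γ * γ ^ k)) := by
      rw [pow_succ', mul_pow]; gcongr
    have hβk : β ^ k = x * γ ^ k := mul_pow _ _ _
    calc (β - 1) * (S * (4 * x + 1)) ≤ β * ((2 * r + 1) * (γ * γ ^ k)) * (4 * x + 1) := by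
          rw [← mul_assoc]; exact mul_le_mul_of_nonneg_right (hmass.trans hβJ) (by positivity)
      _ = β * γ * (4 * x + 1) * (γ ^ k * (2 * r + 1)) := by ring
      _ < (β - 1) * x * (γ ^ k * (2 * r + 1)) :=
          mul_lt_mul_of_pos_right
            (by nlinarith [mul_le_mul_of_nonneg_left hγ' (by linarith : 0 ≤ β)]) (by positivity)
      _ = (β - 1) * (β ^ k * (2 * r + 1)) := by rw [hβk]; ring

theorem discFreq_geomBlocks_mem (hB : 6 ≤ B) (hγ : 0 < γ) (hγ' : γ ≤ 1 / 10) (hβ : 6 ≤ B * γ)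
    (k : ℕ) : (B : ℝ) ^ k ≤ discFreq (geomBlocks B γ) (3 * B ^ k) ∧
      (discFreq (geomBlocks B γ) (3 * B ^ k) : ℝ) ≤ 5 / 2 * B ^ k := by
  have hmid := pow_div_le_discAvg_geomBlocks (B := B) (by omega) hγ.le k
  refine discFreq_mem_of_lt_discAvg (r₀ := 2 * B ^ k) (fun r hr => ?_) fun r hr =>
    (discAvg_geomBlocks_lt hB hγ hγ' hβ hr).trans_le hmid
  rw [discAvg_geomBlocks_eq_zero (by omega) (by exact_mod_cast hr)]
  exact hmid.trans_lt' (div_pos (pow_pos (by linarith) k) (by positivity))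

end geomBlocks

theorem exists_geomBlocks_memℓp {p : ℝ≥0∞} (hp : 1 < p) :
    ∃ (B : ℕ) (γ : ℝ), 6 ≤ B ∧ 0 < γ ∧ γ ≤ 1 / 10 ∧ 6 ≤ B * γ ∧ Memℓp (geomBlocks B γ) p := by
  rcases eq_or_ne p ⊤ with rfl | hp_top
  · exact ⟨60, 1 / 10, by norm_num, by norm_num, le_rfl, by norm_num,
      memℓp_top_geomBlocks (by norm_num) (by norm_num)⟩
  have hq : 1 < p.toReal := by
    simpa using (ENNReal.toReal_lt_toReal ENNReal.one_ne_top hp_top).2 hp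
  -- `γ = 10⁻ᵇ` and `B = 10ᵇ⁺¹` give `B γ = 10` and `B γ ^ p = 10 ^ (b + 1 - b p) < 1`
  obtain ⟨b, hb⟩ := exists_nat_gt (1 / (p.toReal - 1))
  have hb₁ : 1 ≤ b := by
    have : (0 : ℝ) < b := (by positivity : (0 : ℝ) < 1 / (p.toReal - 1)).trans hb
    exact_mod_cast this
  have hbq : (b : ℝ) + 1 < b * p.toReal := by
    rw [div_lt_iff₀ (by linarith)] at hb
    linarith
  have hB : 6 ≤ 10 ^ (b + 1) := calc
    6 ≤ 10 ^ 1 := by norm_num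
    _ ≤ 10 ^ (b + 1) := Nat.pow_le_pow_right (by norm_num) (by omega)
  refine ⟨10 ^ (b + 1), ((10 : ℝ) ^ b)⁻¹, hB, by positivity, ?_, ?_,
    memℓp_geomBlocks (by omega) (by positivity) (by linarith) ?_⟩
  · rw [inv_le_comm₀ (by positivity) (by norm_num)]
    calc (1 / 10 : ℝ)⁻¹ = 10 ^ 1 := by norm_num
      _ ≤ 10 ^ b := pow_le_pow_right₀ (by norm_num) hb₁
  · push_cast
    rw [pow_succ, mul_right_comm, mul_inv_cancel₀ (by positivity)]
    norm_num
  · rw [Real.inv_rpow (by positivity), ← Real.rpow_natCast, ← Real.rpow_mul (by norm_num),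
      ← div_eq_mul_inv, div_lt_one (by positivity), Nat.cast_pow, ← Real.rpow_natCast]
    exact Real.rpow_lt_rpow_of_exponent_lt (by norm_num) (by push_cast; linarith)

theorem stmt19 (p : ℝ≥0∞) (hp : 1 < p) :
    ∃ ε : ℝ, 0 < ε ∧ ε < 1 / 2 ∧ ∃ f : ℤ → ℝ, Memℓp f p ∧
      {n : ℤ | ε ≤ (discFreq f n : ℝ) / |(n : ℝ)| ∧
        (discFreq f n : ℝ) / |(n : ℝ)| ≤ 1 - ε}.Infinite := by
  obtain ⟨B, γ, hB, hγ, hγ', hβ, hf⟩ := exists_geomBlocks_memℓp hp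
  refine ⟨1 / 6, by norm_num, by norm_num, geomBlocks B γ, hf,
    Set.infinite_of_injective_forall_mem (f := fun k : ℕ => 3 * (B : ℤ) ^ k) ?_ fun k => ?_⟩
  · intro a b hab
    exact Nat.pow_right_injective (by omega : 2 ≤ B)
      (by exact_mod_cast mul_left_cancel₀ three_ne_zero hab)
  · obtain ⟨hlo, hhi⟩ := discFreq_geomBlocks_mem hB hγ hγ' hβ k
    have hn : |((3 * (B : ℤ) ^ k : ℤ) : ℝ)| = 3 * (B : ℝ) ^ k := by
      push_cast
      exact abs_of_nonneg (by positivity)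
    have hBk : (0 : ℝ) < 3 * (B : ℝ) ^ k := by positivity
    simp only [Set.mem_ofPred_eq, hn, le_div_iff₀ hBk, div_le_iff₀ hBk]
    constructor <;> linarith
end
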